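/- arXiv:1803.01760 — 7 statements merged into one kernel-verified Lean document; each statement's English description precedes it below -/
import Mathlib

section
/- Let 1 < i < j ≤ n with j ≥ 4. If 1 < i ≤ ⌊j/2⌋, then the order of the product f_{i−1} f_{j−1} of pancake generators in the symmetric group S_n is 4. -/
/-!
Write `g = f_m f_k` with `m = i - 1`, `k = j - 1`. Then `g²` reverses the two blocks
`[0, m]` and `[k - m, k]` of positions and fixes everything else; `i ≤ ⌊j/2⌋` makes these
blocks disjoint, so `g²` is an involution, and it moves position `0` because `m > 0`.
-/

open Equiv

/-- The pancake generator `f_m` of the symmetric group `S_n` on `{1,…,n}`, modeled as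
`Equiv.Perm (Fin n)` (positions `0`-indexed): it reverses the first `m+1` entries, i.e.
it sends the position `a` to `m - a` whenever `a ≤ m` (and `m < n`), and fixes all other
positions.  (In `1`-indexed terms, `f_m a = m + 2 - a` for `1 ≤ a ≤ m+1` and `f_m a = a`
for `m + 1 < a ≤ n`.) -/
def pancake (n m : ℕ) : Equiv.Perm (Fin n) :=
  Function.Involutive.toPerm
    (fun a => if h : (a : ℕ) ≤ m ∧ m < n then
        ⟨m - (a : ℕ), Nat.lt_of_le_of_lt (Nat.sub_le m a) h.2⟩ else a)
    (by
      intro a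
      dsimp only
      by_cases h : (a : ℕ) ≤ m ∧ m < n
      · rw [dif_pos h, dif_pos ⟨Nat.sub_le m (a : ℕ), h.2⟩]
        exact Fin.ext (Nat.sub_sub_self h.1)
      · rw [dif_neg h, dif_neg h])

section

variable {n m k : ℕ}

lemma pancake_apply_val (hm : m < n) (x : Fin n) :
    (pancake n m x : ℕ) = if (x : ℕ) ≤ m then m - x else x := by
  change ((if h : (x : ℕ) ≤ m ∧ m < n then (⟨m - x, _⟩ : Fin n) else x : Fin n) : ℕ) = _
  split_ifs <;> simp_all

lemma pancake_mul_pancake_apply_val (hmk : m < k) (hk : k < n) (x : Fin n) :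
    ((pancake n m * pancake n k) x : ℕ) =
      if (x : ℕ) < k - m then k - x else if (x : ℕ) ≤ k then x - (k - m) else x := by
  rw [Perm.mul_apply, pancake_apply_val (hmk.trans hk), pancake_apply_val hk]
  split_ifs <;> omega

lemma sq_pancake_mul_pancake_apply_val (hmk : 2 * m < k) (hk : k < n) (x : Fin n) :
    (((pancake n m * pancake n k) ^ 2) x : ℕ) =
      if (x : ℕ) ≤ m then m - x
      else if k - m ≤ (x : ℕ) ∧ (x : ℕ) ≤ k then 2 * k - m - x else x := by
  rw [sq, Perm.mul_apply, pancake_mul_pancake_apply_val (by omega) hk,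
    pancake_mul_pancake_apply_val (by omega) hk]
  split_ifs <;> omega

lemma pow_four_pancake_mul_pancake (hmk : 2 * m < k) (hk : k < n) :
    (pancake n m * pancake n k) ^ 4 = 1 := by
  refine Perm.ext fun x => Fin.ext ?_
  rw [show 4 = 2 + 2 from rfl, pow_add, Perm.mul_apply, Perm.one_apply,
    sq_pancake_mul_pancake_apply_val hmk hk, sq_pancake_mul_pancake_apply_val hmk hk]
  split_ifs <;> omega

lemma sq_pancake_mul_pancake_ne_one (hm : 0 < m) (hmk : 2 * m < k) (hk : k < n) :
    (pancake n m * pancake n k) ^ 2 ≠ 1 := by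
  intro h
  have h0 := sq_pancake_mul_pancake_apply_val hmk hk ⟨0, by omega⟩
  simp only [h, Perm.one_apply, zero_le, if_true] at h0
  omega

end

theorem order_pancake_mul_of_le_half_general (n i j : ℕ) (hi : 1 < i) (hjn : j ≤ n)
    (hhalf : i ≤ j / 2) :
    orderOf (pancake n (i - 1) * pancake n (j - 1)) = 4 := by
  have hmk : 2 * (i - 1) < j - 1 := by omega
  have hk : j - 1 < n := by omega
  exact orderOf_eq_prime_pow (p := 2) (n := 1)
    (sq_pancake_mul_pancake_ne_one (by omega) hmk hk) (pow_four_pancake_mul_pancake hmk hk)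

/-- If `1 < i < j ≤ n`, `j ≥ 4` and `i ≤ ⌊j/2⌋`, then the order of `f_{i-1} f_{j-1}`
in `S_n` is `4`. -/
theorem order_pancake_mul_of_le_half (n i j : ℕ) (hi : 1 < i) (hij : i < j) (hjn : j ≤ n)
    (hj4 : 4 ≤ j) (hhalf : i ≤ j / 2) :
    orderOf (pancake n (i - 1) * pancake n (j - 1)) = 4 :=
  order_pancake_mul_of_le_half_general n i j hi hjn hhalf
end

section
/- Let 1 < i < j ≤ n with j ≥ 4 and ⌊j/2⌋ < i < j−1 (and ⌊j/2⌋ > 1). Set d = j−i, q = ⌊j/d⌋, r = j mod d, and t = d−r. Then the order of f_{i−1} f_{j−1} in S_n equals: 2q(q+1) if (r ≥ 2 and t ≥ 2), or (r = 1, t ≥ 2, q even), or (r ≥ 2, t = 1, q odd); q(q+1) if (r = 1, t ≥ 2, q odd), or (r ≥ 2, t = 1, q even), or (r = 1 and t = 1); and 2q if r = 0. -/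
/-!
On the positions `0, …, j - 1` the product `f_{i-1} f_{j-1}` acts by `x ↦ j - 1 - x` for `x < d`
and `x ↦ x - d` for `d ≤ x`, and it fixes the positions `≥ j`. Every orbit meets the window
`[0, d)`, and the first return map to the window reverses the blocks `[0, r)` and `[r, d)`, with
return times `q + 1` and `q`. So the cycles through the first block have length `q + 1` or
`2 (q + 1)`, those through the second `q` or `2 q`, the doubled length occurring as soon as the
block has two points; the order is the lcm of these lengths.
-/

open Function

theorem Function.IsPeriodicPt.minimalPeriod_eq {α : Type*} {f : α → α} {x : α} {n : ℕ}
    (hn : 0 < n) (hx : IsPeriodicPt f n x) (hne : ∀ k, 0 < k → k < n → f^[k] x ≠ x) :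
    minimalPeriod f x = n :=
  (hx.minimalPeriod_le hn).antisymm <| not_lt.1 fun hlt =>
    hne _ (hx.minimalPeriod_pos hn) hlt (isPeriodicPt_minimalPeriod f x)

theorem Function.minimalPeriod_eq_of_return {α : Type*} [DecidableEq α] {f : α → α}
    {p : α → Prop} {x y : α} {τ : ℕ} (hτ : 0 < τ) (hx : p x) (hxy : f^[τ] x = y) (hyx : f^[τ] y = x)
    (hxp : ∀ k, 0 < k → k < τ → ¬ p (f^[k] x)) (hyp : ∀ k, 0 < k → k < τ → ¬ p (f^[k] y)) :
    minimalPeriod f x = if y = x then τ else 2 * τ := by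
  split_ifs with h
  · subst h
    exact IsPeriodicPt.minimalPeriod_eq hτ hxy fun k hk hkτ hkx =>
      hxp k hk hkτ (by rwa [hkx])
  · have h2τ : f^[τ + τ] x = f^[τ] y := by rw [iterate_add_apply, hxy]
    refine IsPeriodicPt.minimalPeriod_eq (by omega) (by rw [two_mul]; exact h2τ.trans hyx) ?_
    intro k hk hk2 hkx
    rcases lt_trichotomy k τ with hlt | rfl | hgt
    · exact hxp k hk hlt (by rwa [hkx])
    · exact h (hxy ▸ hkx)
    · obtain ⟨l, rfl⟩ := Nat.exists_eq_add_of_lt hgt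
      rw [show τ + l + 1 = (l + 1) + τ by omega, iterate_add_apply, hxy] at hkx
      exact hyp (l + 1) (by omega) (by omega) (by rwa [hkx])

theorem Equiv.Perm.pow_eq_one_iff_of_forall_exists {α : Type*} (σ : Equiv.Perm α)
    {p : α → Prop} (hp : ∀ x, ∃ k, p ((σ ^ k) x)) {m : ℕ} :
    σ ^ m = 1 ↔ ∀ x, p x → (σ ^ m) x = x := by
  refine ⟨fun h x _ => by rw [h, Equiv.Perm.one_apply], fun h => Equiv.ext fun x => ?_⟩
  obtain ⟨k, hk⟩ := hp x
  apply (σ ^ k).injective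
  rw [Equiv.Perm.one_apply, ← Equiv.Perm.mul_apply, (Commute.pow_pow_self σ k m).eq,
    Equiv.Perm.mul_apply, h _ hk]

theorem Nat.Coprime.lcm_two_mul_of_odd {a b : ℕ} (hab : a.Coprime b) (hb : Odd b) :
    Nat.lcm (2 * a) b = 2 * a * b :=
  (Nat.Coprime.mul_left (Nat.coprime_two_left.2 hb) hab).lcm_eq_mul

theorem Nat.Coprime.lcm_two_mul_of_even {a b : ℕ} (hab : a.Coprime b) (hb : Even b) :
    Nat.lcm (2 * a) b = a * b := by
  obtain ⟨c, rfl⟩ := hb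
  rw [← two_mul] at hab ⊢
  rw [Nat.lcm_mul_left, (hab.coprime_dvd_right (Dvd.intro_left 2 rfl)).lcm_eq_mul]
  ring

/-- The permutation `f_{i-1} f_{j-1}` on `0`-indexed positions, with `d = j - i`. -/
def flipShift (d j x : ℕ) : ℕ :=
  if x < d then j - 1 - x else if x < j then x - d else x

theorem coe_pancake_apply (n m : ℕ) (a : Fin n) :
    (pancake n m a : ℕ) = if (a : ℕ) ≤ m ∧ m < n then m - a else a := by
  by_cases h : (a : ℕ) ≤ m ∧ m < n <;> simp [pancake, Function.Involutive.toPerm, h]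

theorem coe_pancake_mul_apply {n i j : ℕ} (hij : i < j) (hjn : j ≤ n) (x : Fin n) :
    ((pancake n (i - 1) * pancake n (j - 1)) x : ℕ) = flipShift (j - i) j x := by
  simp only [Equiv.Perm.mul_apply, coe_pancake_apply, flipShift]
  split_ifs <;> omega

section flipShift

variable {d j : ℕ}

theorem flipShift_iterate_of_le {x k : ℕ} (hx : x < j) (hk : d * k ≤ x) :
    (flipShift d j)^[k] x = x - d * k := by
  induction k generalizing x with
  | zero => rfl
  | succ k ih =>
    rw [mul_add_one] at hk
    have hstep : flipShift d j x = x - d := by unfold flipShift; split_ifs <;> omega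
    rw [iterate_succ_apply, hstep, ih (by omega) (by omega), mul_add_one]
    omega

theorem flipShift_iterate_succ_of_lt {y k : ℕ} (hy : y < d) (hk : y + d * k < j) :
    (flipShift d j)^[k + 1] y = j - 1 - y - d * k := by
  have hstep : flipShift d j y = j - 1 - y := if_pos hy
  rw [iterate_succ_apply, hstep, flipShift_iterate_of_le (by omega) (by omega)]

theorem le_flipShift_iterate_succ {y z Q k : ℕ} (hy : y < d) (hj : y + d * Q + z + 1 = j)
    (hk : k < Q) : d ≤ (flipShift d j)^[k + 1] y := by
  have hkQ : d * (k + 1) ≤ d * Q := Nat.mul_le_mul_left d hk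
  rw [mul_add_one] at hkQ
  rw [flipShift_iterate_succ_of_lt hy (by omega)]
  omega

/-- Positions `y, z < d` with `y + z ≡ j - 1 (mod d)` are exchanged by the first return map to
`[0, d)`, after `Q + 1` steps each. -/
theorem minimalPeriod_flipShift {y z Q : ℕ} (hy : y < d) (hz : z < d)
    (hj : y + d * Q + z + 1 = j) :
    minimalPeriod (flipShift d j) y = if z = y then Q + 1 else 2 * (Q + 1) := by
  have hj' : z + d * Q + y + 1 = j := by omega
  refine minimalPeriod_eq_of_return (p := (· < d)) (Nat.succ_pos Q) hy ?_ ?_ ?_ ?_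
  · rw [flipShift_iterate_succ_of_lt hy (by omega)]; omega
  · rw [flipShift_iterate_succ_of_lt hz (by omega)]; omega
  · rintro (_ | k) hk hkQ
    · omega
    · exact (le_flipShift_iterate_succ hy hj (by omega)).not_gt
  · rintro (_ | k) hk hkQ
    · omega
    · exact (le_flipShift_iterate_succ hz hj' (by omega)).not_gt

end flipShift

/-- The lcm of the cycle lengths through a block of `s` window points that the first return map
reverses, each point returning after `τ` steps: a fixed point (`s` odd) gives `τ`, a swapped
pair (`s ≥ 2`) gives `2 τ`. -/
def blockOrder (τ s : ℕ) : ℕ :=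
  if s = 0 then 1 else if s = 1 then τ else 2 * τ

theorem blockOrder_zero (τ : ℕ) : blockOrder τ 0 = 1 := rfl

theorem blockOrder_one (τ : ℕ) : blockOrder τ 1 = τ := rfl

theorem blockOrder_of_two_le {s : ℕ} (τ : ℕ) (hs : 2 ≤ s) : blockOrder τ s = 2 * τ := by
  rw [blockOrder, if_neg (by omega), if_neg (by omega)]

theorem forall_dvd_iff_blockOrder_dvd {τ s a m : ℕ} {P : ℕ → ℕ}
    (hP : ∀ y, a ≤ y → y < a + s → P y = if 2 * a + s - 1 - y = y then τ else 2 * τ) :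
    (∀ y, a ≤ y → y < a + s → P y ∣ m) ↔ blockOrder τ s ∣ m := by
  rcases Nat.lt_trichotomy s 1 with hs | rfl | hs
  · rw [show s = 0 by omega, blockOrder_zero]
    exact iff_of_true (fun y h1 h2 => by omega) (one_dvd m)
  · rw [blockOrder_one]
    refine ⟨fun h => ?_, fun h y h1 h2 => ?_⟩
    · have ha := h a le_rfl (by omega)
      rwa [hP a le_rfl (by omega), if_pos (by omega)] at ha
    · rwa [hP y h1 h2, if_pos (by omega)]
  · rw [blockOrder_of_two_le τ hs]
    refine ⟨fun h => ?_, fun h y h1 h2 => ?_⟩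
    · have ha := h a le_rfl (by omega)
      rwa [hP a le_rfl (by omega), if_neg (by omega)] at ha
    · rw [hP y h1 h2]
      split_ifs
      · exact (Dvd.intro_left 2 rfl).trans h
      · exact h

theorem forall_isPeriodicPt_flipShift_iff {d j q r m : ℕ} (hdj : d ≤ j) (hdiv : d * q + r = j)
    (hr : r < d) :
    (∀ y < d, IsPeriodicPt (flipShift d j) m y) ↔
      blockOrder (q + 1) r ∣ m ∧ blockOrder q (d - r) ∣ m := by
  obtain ⟨Q, rfl⟩ : ∃ Q, q = Q + 1 := Nat.exists_eq_succ_of_ne_zero (by rintro rfl; omega)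
  rw [mul_add_one] at hdiv
  simp only [isPeriodicPt_iff_minimalPeriod_dvd]
  rw [← forall_dvd_iff_blockOrder_dvd (a := 0) (P := minimalPeriod (flipShift d j)),
    ← forall_dvd_iff_blockOrder_dvd (a := r) (P := minimalPeriod (flipShift d j))]
  · refine ⟨fun h => ⟨fun y _ hy => h y (by omega), fun y _ hy => h y (by omega)⟩, ?_⟩
    rintro ⟨h₁, h₂⟩ y hy
    by_cases hyr : y < r
    · exact h₁ y (Nat.zero_le y) (by omega)
    · exact h₂ y (by omega) (by omega)
  · exact fun y _ hy => minimalPeriod_flipShift (by omega) (by omega) (by omega)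
  · exact fun y _ hy =>
      minimalPeriod_flipShift (by omega) (by omega) (by rw [mul_add_one]; omega)

theorem pancake_mul_pow_eq_one_iff {n i j m : ℕ} (hij : i < j) (hjn : j ≤ n) :
    (pancake n (i - 1) * pancake n (j - 1)) ^ m = 1 ↔
      ∀ y < j - i, IsPeriodicPt (flipShift (j - i) j) m y := by
  set g := pancake n (i - 1) * pancake n (j - 1)
  have hcoe (k : ℕ) (x : Fin n) : ((g ^ k) x : ℕ) = (flipShift (j - i) j)^[k] x := by
    rw [Equiv.Perm.coe_pow]
    exact Semiconj.iterate_right (f := Fin.val) (coe_pancake_mul_apply hij hjn) k x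
  have hreach (x : Fin n) : ∃ k, ((g ^ k) x : ℕ) < j - i ∨ j ≤ ((g ^ k) x : ℕ) := by
    by_cases hx : (x : ℕ) < j
    · refine ⟨x / (j - i), Or.inl ?_⟩
      rw [hcoe, flipShift_iterate_of_le hx (Nat.mul_div_le x _)]
      have hdivmod := Nat.div_add_mod (x : ℕ) (j - i)
      have hmod := Nat.mod_lt (x : ℕ) (show 0 < j - i by omega)
      omega
    · exact ⟨0, Or.inr (by simpa using hx)⟩
  rw [g.pow_eq_one_iff_of_forall_exists (p := fun x : Fin n => (x : ℕ) < j - i ∨ j ≤ x) hreach]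
  refine ⟨fun h y hy => ?_, fun h x hx => ?_⟩
  · have hy' := h ⟨y, by omega⟩ (Or.inl hy)
    rwa [Fin.ext_iff, hcoe] at hy'
  · rw [Fin.ext_iff, hcoe]
    rcases hx with hx | hx
    · exact h x hx
    · exact iterate_fixed (by unfold flipShift; split_ifs <;> omega) m

theorem orderOf_pancake_mul {n i j q r : ℕ} (hij : i < j) (hjn : j ≤ n)
    (hdiv : (j - i) * q + r = j) (hr : r < j - i) :
    orderOf (pancake n (i - 1) * pancake n (j - 1)) =
      Nat.lcm (blockOrder (q + 1) r) (blockOrder q (j - i - r)) :=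
  Nat.dvd_right_iff_eq.1 fun m => by
    rw [orderOf_dvd_iff_pow_eq_one, pancake_mul_pow_eq_one_iff hij hjn,
      forall_isPeriodicPt_flipShift_iff (by omega) hdiv hr, Nat.lcm_dvd_iff]

theorem order_pancake_mul_middle_case_general (n i j d q r t : ℕ) (hij : i < j)
    (hjn : j ≤ n) (hij1 : i < j - 1)
    (hd : d = j - i) (hq : q = j / d) (hr : r = j % d) (ht : t = d - r) :
    ((2 ≤ r ∧ 2 ≤ t) ∨ (r = 1 ∧ 2 ≤ t ∧ Even q) ∨ (2 ≤ r ∧ t = 1 ∧ Odd q) →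
      orderOf (pancake n (i - 1) * pancake n (j - 1)) = 2 * q * (q + 1)) ∧
    ((r = 1 ∧ 2 ≤ t ∧ Odd q) ∨ (2 ≤ r ∧ t = 1 ∧ Even q) ∨ (r = 1 ∧ t = 1) →
      orderOf (pancake n (i - 1) * pancake n (j - 1)) = q * (q + 1)) ∧
    (r = 0 → orderOf (pancake n (i - 1) * pancake n (j - 1)) = 2 * q) := by
  subst hd
  have hrd : r < j - i := hr ▸ Nat.mod_lt j (by omega)
  rw [orderOf_pancake_mul (q := q) hij hjn (by rw [hq, hr, Nat.div_add_mod]) hrd, ← ht]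
  have hcop : q.Coprime (q + 1) := Nat.coprime_self_add_right.2 (Nat.coprime_one_right q)
  refine ⟨?_, ?_, fun hr0 => ?_⟩
  · rintro (⟨hr2, ht2⟩ | ⟨rfl, ht2, hqe⟩ | ⟨hr2, rfl, hqo⟩)
    · rw [blockOrder_of_two_le _ hr2, blockOrder_of_two_le _ ht2, Nat.lcm_mul_left,
        hcop.symm.lcm_eq_mul]
      ring
    · rw [blockOrder_one, blockOrder_of_two_le _ ht2, Nat.lcm_comm,
        hcop.lcm_two_mul_of_odd hqe.add_one]
    · rw [blockOrder_of_two_le _ hr2, blockOrder_one, hcop.symm.lcm_two_mul_of_odd hqo]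
      ring
  · rintro (⟨rfl, ht2, hqo⟩ | ⟨hr2, rfl, hqe⟩ | ⟨rfl, rfl⟩)
    · rw [blockOrder_one, blockOrder_of_two_le _ ht2, Nat.lcm_comm,
        hcop.lcm_two_mul_of_even hqo.add_one]
    · rw [blockOrder_of_two_le _ hr2, blockOrder_one, hcop.symm.lcm_two_mul_of_even hqe]
      ring
    · rw [blockOrder_one, blockOrder_one, hcop.symm.lcm_eq_mul]
      ring
  · rw [hr0, blockOrder_zero, blockOrder_of_two_le _ (by omega), Nat.lcm_one_left]

/-- Theorem (Coxeter-like relations, middle case): let `1 < i < j ≤ n` with `j ≥ 4`,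
`1 < ⌊j/2⌋ < i < j - 1`, and set `d = j - i`, `q = ⌊j/d⌋`, `r = j mod d`, `t = d - r`.
Then the order of `f_{i-1} f_{j-1}` in `S_n` is `2q(q+1)`, `q(q+1)` or `2q` according
to the listed cases on `r`, `t` and the parity of `q`. -/
theorem order_pancake_mul_middle_case (n i j d q r t : ℕ) (hi : 1 < i) (hij : i < j)
    (hjn : j ≤ n) (hj4 : 4 ≤ j) (hhalf1 : 1 < j / 2) (hhalf : j / 2 < i) (hij1 : i < j - 1)
    (hd : d = j - i) (hq : q = j / d) (hr : r = j % d) (ht : t = d - r) :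
    ((2 ≤ r ∧ 2 ≤ t) ∨ (r = 1 ∧ 2 ≤ t ∧ Even q) ∨ (2 ≤ r ∧ t = 1 ∧ Odd q) →
      orderOf (pancake n (i - 1) * pancake n (j - 1)) = 2 * q * (q + 1)) ∧
    ((r = 1 ∧ 2 ≤ t ∧ Odd q) ∨ (2 ≤ r ∧ t = 1 ∧ Even q) ∨ (r = 1 ∧ t = 1) →
      orderOf (pancake n (i - 1) * pancake n (j - 1)) = q * (q + 1)) ∧
    (r = 0 → orderOf (pancake n (i - 1) * pancake n (j - 1)) = 2 * q) :=
  order_pancake_mul_middle_case_general n i j d q r t hij hjn hij1 hd hq hr ht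
end

section
/- For every j with 4 ≤ j ≤ n, the order of the product f_{j−2} f_{j−1} of consecutive pancake generators in the symmetric group S_n is j. -/
/-!
Positions `0, …, m` are reversed by `f_m` and `0, …, m + 1` by `f_{m+1}`, so `f_{m+1} f_m` sends
`a ↦ a + 1` for `a ≤ m` and `m + 1 ↦ 0`: it is the `(m + 2)`-cycle `(0 1 … m+1)`. Flips are
involutions, so `f_m f_{m+1}` is the inverse of that cycle and has order `m + 2`.
-/

open Equiv

theorem Fin.orderOf_cycleRange {n : ℕ} (i : Fin n) : orderOf (Fin.cycleRange i) = i + 1 := by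
  have : NeZero n := ⟨i.pos.ne'⟩
  rcases eq_or_ne i 0 with rfl | hi
  · simp
  · rw [← Perm.lcm_cycleType, Fin.cycleType_cycleRange hi, Multiset.lcm_singleton, normalize_eq]

section Pancake

variable {n m : ℕ}

theorem pancake_apply_of_le (a : Fin n) (ha : (a : ℕ) ≤ m) (hm : m < n) :
    pancake n m a = ⟨m - a, (Nat.sub_le m a).trans_lt hm⟩ :=
  dif_pos ⟨ha, hm⟩

theorem pancake_apply_of_lt (a : Fin n) (ha : m < a) : pancake n m a = a :=
  dif_neg fun h => (h.1.trans_lt ha).false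

theorem pancake_inv : (pancake n m)⁻¹ = pancake n m :=
  rfl

theorem pancake_succ_mul_pancake (hm : m + 1 < n) :
    pancake n (m + 1) * pancake n m = Fin.cycleRange ⟨m + 1, hm⟩ := by
  refine Equiv.ext fun a => Fin.ext ?_
  rw [Perm.mul_apply]
  rcases lt_trichotomy (a : ℕ) (m + 1) with ha | ha | ha
  · rw [pancake_apply_of_le a (by omega) (by omega), pancake_apply_of_le _ (by dsimp; omega) hm,
      Fin.coe_cycleRange_of_lt (Fin.mk_lt_mk.mpr ha)]
    dsimp only
    omega
  · rw [pancake_apply_of_lt a (by omega), pancake_apply_of_le a ha.le hm,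
      Fin.coe_cycleRange_of_le (le_of_eq (Fin.ext ha)), if_pos (Fin.ext ha)]
    dsimp only
    omega
  · rw [pancake_apply_of_lt a (by omega), pancake_apply_of_lt a ha,
      Fin.cycleRange_of_gt (Fin.mk_lt_mk.mpr ha)]

theorem orderOf_pancake_mul_pancake_succ (hm : m + 1 < n) :
    orderOf (pancake n m * pancake n (m + 1)) = m + 2 := by
  rw [← orderOf_inv, mul_inv_rev, pancake_inv, pancake_inv, pancake_succ_mul_pancake hm,
    Fin.orderOf_cycleRange]

end Pancake

/-- For every `j` with `4 ≤ j ≤ n`, the order of the product `f_{j-2} f_{j-1}` of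
consecutive pancake generators in `S_n` is `j`. -/
theorem order_pancake_mul_consecutive (n j : ℕ) (hj4 : 4 ≤ j) (hjn : j ≤ n) :
    orderOf (pancake n (j - 2) * pancake n (j - 1)) = j := by
  obtain ⟨m, rfl⟩ : ∃ m, j = m + 2 := ⟨j - 2, by omega⟩
  exact orderOf_pancake_mul_pancake_succ (by omega)
end

section
/- For every j with 6 ≤ j ≤ n, the order of the product f_1 f_2 f_{j−1} of pancake generators in the symmetric group S_n is 6. -/
theorem orderOf_eq_six {G : Type*} [Monoid G] {x : G} (h6 : x ^ 6 = 1) (h2 : x ^ 2 ≠ 1)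
    (h3 : x ^ 3 ≠ 1) : orderOf x = 6 := by
  refine orderOf_eq_of_pow_and_pow_div_prime (by norm_num) h6 fun p hp hp6 => ?_
  have hp_le : p ≤ 6 := Nat.le_of_dvd (by norm_num) hp6
  obtain rfl | rfl : p = 2 ∨ p = 3 := by interval_cases p <;> first | omega | norm_num at *
  exacts [h3, h2]

theorem pow_six_eq_one_of_commute_conj {G : Type*} [Group G] {r s : G} (hr : r ^ 3 = 1)
    (hs : s * s = 1) (hc : Commute r (s * r * s⁻¹)) : (r * s) ^ 6 = 1 := by
  have hs_inv : s⁻¹ = s := inv_eq_of_mul_eq_one_right hs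
  have hsq : (r * s) ^ 2 = r * (s * r * s⁻¹) := by
    rw [hs_inv, sq]; simp only [mul_assoc]
  calc (r * s) ^ 6 = (r * (s * r * s⁻¹)) ^ 3 := by rw [← hsq, ← pow_mul]
    _ = r ^ 3 * (s * r ^ 3 * s⁻¹) := by rw [hc.mul_pow, conj_pow]
    _ = 1 := by rw [hr, mul_one, mul_inv_cancel, one_mul]

theorem val_pancake_apply (n m : ℕ) (a : Fin n) :
    ((pancake n m a : Fin n) : ℕ) = if (a : ℕ) ≤ m ∧ m < n then m - (a : ℕ) else a := by
  simp only [pancake]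
  split_ifs with h <;> simp [Function.Involutive.toPerm, h]

theorem val_pancake_apply_of_le {n m : ℕ} (hmn : m < n) {a : Fin n} (ha : (a : ℕ) ≤ m) :
    ((pancake n m a : Fin n) : ℕ) = m - a := by
  rw [val_pancake_apply, if_pos ⟨ha, hmn⟩]

theorem pancake_mul_self (n m : ℕ) : pancake n m * pancake n m = 1 :=
  Equiv.ext (Function.Involutive.toPerm_involutive _)

theorem val_pancake_one_mul_pancake_two_apply {n : ℕ} (hn : 3 ≤ n) (a : Fin n) :
    (((pancake n 1 * pancake n 2) a : Fin n) : ℕ) =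
      if (a : ℕ) ≤ 2 then ((a : ℕ) + 2) % 3 else a := by
  simp only [Equiv.Perm.mul_apply, val_pancake_apply]
  split_ifs <;> omega

theorem pancake_one_mul_pancake_two_apply_of_three_le {n : ℕ} {a : Fin n}
    (ha : 3 ≤ (a : ℕ)) : (pancake n 1 * pancake n 2) a = a :=
  Fin.ext <| by rw [val_pancake_one_mul_pancake_two_apply (by omega), if_neg (by omega)]

theorem pancake_one_mul_pancake_two_pow_three {n : ℕ} (hn : 3 ≤ n) :
    (pancake n 1 * pancake n 2) ^ 3 = 1 := by
  have hr := val_pancake_one_mul_pancake_two_apply hn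
  -- so that `simp` rewrites with `hr` instead of unfolding the product
  generalize pancake n 1 * pancake n 2 = r at hr ⊢
  ext a
  simp only [pow_succ, pow_zero, one_mul, Equiv.Perm.mul_apply, Equiv.Perm.one_apply, hr]
  split_ifs <;> omega

theorem disjoint_pancake_one_mul_pancake_two_conj {n m : ℕ} (hm : 5 ≤ m) (hmn : m < n) :
    (pancake n 1 * pancake n 2).Disjoint
      (pancake n m * (pancake n 1 * pancake n 2) * (pancake n m)⁻¹) := by
  intro a
  by_cases ha : 3 ≤ (a : ℕ)
  · exact Or.inl (pancake_one_mul_pancake_two_apply_of_three_le ha)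
  · right
    have hsa : 3 ≤ ((pancake n m a : Fin n) : ℕ) := by
      rw [val_pancake_apply_of_le hmn (by omega)]; omega
    rw [inv_eq_of_mul_eq_one_right (pancake_mul_self n m), Equiv.Perm.mul_apply,
      Equiv.Perm.mul_apply, pancake_one_mul_pancake_two_apply_of_three_le hsa,
      ← Equiv.Perm.mul_apply, pancake_mul_self, Equiv.Perm.one_apply]

theorem pancake_one_two_mul_apply_zero {n m : ℕ} (hm : 3 ≤ m) (hmn : m < n) :
    (pancake n 1 * pancake n 2 * pancake n m) ⟨0, by omega⟩ = ⟨m, hmn⟩ := by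
  ext
  simp only [Equiv.Perm.mul_apply, val_pancake_apply]
  split_ifs <;> omega

theorem pancake_one_two_mul_apply_self {n m : ℕ} (hm : 2 ≤ m) (hmn : m < n) :
    (pancake n 1 * pancake n 2 * pancake n m) ⟨m, hmn⟩ = ⟨2, by omega⟩ := by
  ext
  simp only [Equiv.Perm.mul_apply, val_pancake_apply]
  split_ifs <;> omega

theorem pancake_one_two_mul_apply_two {n m : ℕ} (hm : 5 ≤ m) (hmn : m < n) :
    (pancake n 1 * pancake n 2 * pancake n m) ⟨2, by omega⟩ = ⟨m - 2, by omega⟩ := by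
  ext
  simp only [Equiv.Perm.mul_apply, val_pancake_apply]
  split_ifs <;> omega

theorem pancake_one_two_mul_pow_two_ne_one {n m : ℕ} (hm : 3 ≤ m) (hmn : m < n) :
    (pancake n 1 * pancake n 2 * pancake n m) ^ 2 ≠ 1 := by
  intro h
  have h0 := congrArg Fin.val (Equiv.ext_iff.mp h ⟨0, by omega⟩)
  rw [sq, Equiv.Perm.mul_apply, pancake_one_two_mul_apply_zero hm hmn,
    pancake_one_two_mul_apply_self (by omega) hmn, Equiv.Perm.one_apply] at h0
  simp at h0

theorem pancake_one_two_mul_pow_three_ne_one {n m : ℕ} (hm : 5 ≤ m) (hmn : m < n) :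
    (pancake n 1 * pancake n 2 * pancake n m) ^ 3 ≠ 1 := by
  intro h
  have h0 := congrArg Fin.val (Equiv.ext_iff.mp h ⟨0, by omega⟩)
  rw [pow_succ, sq, Equiv.Perm.mul_apply, Equiv.Perm.mul_apply,
    pancake_one_two_mul_apply_zero (by omega) hmn, pancake_one_two_mul_apply_self (by omega) hmn,
    pancake_one_two_mul_apply_two hm hmn, Equiv.Perm.one_apply] at h0
  simp only at h0
  omega

/-- For every `j` with `6 ≤ j ≤ n`, the order of `f_1 f_2 f_{j-1}` in `S_n` is `6`. -/
theorem order_pancake_one_two_mul (n j : ℕ) (hj6 : 6 ≤ j) (hjn : j ≤ n) :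
    orderOf (pancake n 1 * pancake n 2 * pancake n (j - 1)) = 6 := by
  have hm : 5 ≤ j - 1 := by omega
  have hmn : j - 1 < n := by omega
  refine orderOf_eq_six ?_ (pancake_one_two_mul_pow_two_ne_one (by omega) hmn)
    (pancake_one_two_mul_pow_three_ne_one hm hmn)
  exact pow_six_eq_one_of_commute_conj (pancake_one_mul_pancake_two_pow_three (by omega))
    (pancake_mul_self n (j - 1)) (disjoint_pancake_one_mul_pancake_two_conj hm hmn).commute
end

section
/- Let 1 < j < k ≤ n. If j = k−2 and k is odd, then the order of f_1 f_{j−1} f_{k−1} in S_n is k. Likewise, if j = k−3 and k is not congruent to 2 modulo 3, then the order of f_1 f_{j−1} f_{k−1} in S_n is k. -/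
/-!
Positions are `0`-indexed. On `{0, …, k-1}` the permutation `f₁ f_{k-3} f_{k-1}` acts as
`descendByTwo k` and `f₁ f_{k-4} f_{k-1}` as `descendByThree k`; both fix every position `≥ k`.
Hence the orbit of `0` runs down arithmetic progressions of step `2` (resp. `3`) starting at
`k-1`, `k-2`, `k-3`, jumping from one to the next at the bottom:
* `k` odd: `0, k-1, k-3, …, 2, 1, k-2, …, 3`;
* `k ≡ 0 (mod 3)`: `0, k-1, …, 2, k-3, …, 3, 1, k-2, …, 4`;
* `k ≡ 1 (mod 3)`: `0, k-1, …, 3, 1, k-2, …, 2, k-3, …, 4`.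
Each visits all of `{0, …, k-1}` before returning to `0`, so the permutation is a `k`-cycle.
-/

open Equiv Set

theorem Equiv.Perm.orderOf_eq_of_orbit {α : Type*} {σ : Perm α} {x : α} {k : ℕ} (hk : 0 < k)
    (hper : (σ ^ k) x = x) (hmin : ∀ i, 0 < i → i < k → (σ ^ i) x ≠ x)
    (hsupp : ∀ y, σ y ≠ y → ∃ i, (σ ^ i) x = y) : orderOf σ = k := by
  refine (orderOf_eq_iff hk).2 ⟨?_, fun i hik hi h => hmin i hi hik (by rw [h]; rfl)⟩
  ext y
  by_cases hy : σ y = y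
  · exact Perm.pow_apply_eq_self_of_apply_eq_self hy k
  · obtain ⟨i, rfl⟩ := hsupp y hy
    rw [← Perm.mul_apply, ← pow_add, add_comm, pow_add, Perm.mul_apply, hper]
    rfl

theorem Equiv.Perm.orderOf_eq_of_trajectory {n k : ℕ} {σ : Perm (Fin n)} {s T : ℕ → ℕ}
    (hk : 0 < k) (hkn : k ≤ n) (hs : ∀ a : Fin n, (a : ℕ) < k → (σ a : ℕ) = s a)
    (hfix : ∀ a : Fin n, k ≤ (a : ℕ) → σ a = a)
    (hmaps : MapsTo T (Iio k) (Iio k)) (hinj : InjOn T (Iio k)) (hper : T k = T 0)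
    (hstep : ∀ i < k, s (T i) = T (i + 1)) : orderOf σ = k := by
  let x : Fin n := ⟨T 0, (hmaps (mem_Iio.2 hk)).trans_le hkn⟩
  have htraj : ∀ i ≤ k, ((σ ^ i) x : ℕ) = T i := by
    intro i
    induction i with
    | zero => intro _; rfl
    | succ i ih =>
      intro hi
      have hTi : T i < k := hmaps (mem_Iio.2 hi)
      rw [pow_succ', Perm.mul_apply, hs _ (by rwa [ih (by omega)]), ih (by omega), hstep i hi]
  refine orderOf_eq_of_orbit hk (Fin.ext ((htraj k le_rfl).trans hper)) ?_ ?_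
  · intro i hi hik h
    have : T i = T 0 := (htraj i hik.le).symm.trans (congrArg Fin.val h)
    exact hi.ne' (hinj hik hk this)
  · intro y hy
    have hyk : (y : ℕ) < k := by
      by_contra! h
      exact hy (hfix y h)
    obtain ⟨i, hi, hTi⟩ :=
      ((finite_Iio k).injOn_iff_bijOn_of_mapsTo hmaps).1 hinj |>.surjOn hyk
    exact ⟨i, Fin.ext ((htraj i (le_of_lt hi)).trans hTi)⟩

def pancakeNat (m a : ℕ) : ℕ := if a ≤ m then m - a else a

theorem pancake_apply (n m : ℕ) (a : Fin n) :
    pancake n m a =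
      if h : (a : ℕ) ≤ m ∧ m < n then ⟨m - a, (Nat.sub_le m a).trans_lt h.2⟩ else a :=
  rfl

theorem val_pancake_apply_s8 {n m : ℕ} (h : m < n) (a : Fin n) :
    (pancake n m a : ℕ) = pancakeNat m a := by
  rw [pancake_apply, pancakeNat]
  split_ifs <;> simp_all

theorem val_pancake_one_mul_mul_apply {n p q : ℕ} (hp : p < n) (hq : q < n) (h1 : 1 < n)
    (a : Fin n) :
    ((pancake n 1 * pancake n p * pancake n q) a : ℕ) =
      pancakeNat 1 (pancakeNat p (pancakeNat q a)) := by
  rw [Perm.mul_apply, Perm.mul_apply, val_pancake_apply_s8 h1, val_pancake_apply_s8 hp,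
    val_pancake_apply_s8 hq]

theorem pancake_one_mul_mul_apply_of_lt {n p q : ℕ} (hpq : p ≤ q) (h1 : 1 ≤ q) (a : Fin n)
    (ha : q < (a : ℕ)) : (pancake n 1 * pancake n p * pancake n q) a = a := by
  apply Fin.ext
  rw [val_pancake_one_mul_mul_apply (by omega) (by omega) (by omega)]
  simp only [pancakeNat]
  split_ifs <;> omega

def descendByTwo (k a : ℕ) : ℕ :=
  if a ≤ 1 then k - 1 - a else if a ≤ 3 then 3 - a else a - 2

def descendByThree (k a : ℕ) : ℕ :=
  if a ≤ 2 then k - 1 - a else if a ≤ 4 then 4 - a else a - 3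

theorem val_pancake_one_mul_sub_three_mul_apply {n k : ℕ} (hk : 3 < k) (hkn : k ≤ n) (a : Fin n)
    (ha : (a : ℕ) < k) :
    ((pancake n 1 * pancake n (k - 3) * pancake n (k - 1)) a : ℕ) = descendByTwo k a := by
  rw [val_pancake_one_mul_mul_apply (by omega) (by omega) (by omega)]
  simp only [pancakeNat, descendByTwo]
  split_ifs <;> omega

theorem val_pancake_one_mul_sub_four_mul_apply {n k : ℕ} (hk : 4 < k) (hkn : k ≤ n) (a : Fin n)
    (ha : (a : ℕ) < k) :
    ((pancake n 1 * pancake n (k - 4) * pancake n (k - 1)) a : ℕ) =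
      descendByThree k a := by
  rw [val_pancake_one_mul_mul_apply (by omega) (by omega) (by omega)]
  simp only [pancakeNat, descendByThree]
  split_ifs <;> omega

def orbitTwoMulAddOne (r i : ℕ) : ℕ :=
  if i = 0 then 0
  else if 2 * r + 1 ≤ i then 0
  else if i ≤ r then 2 * r + 2 - 2 * i
  else if i = r + 1 then 1
  else 4 * r + 3 - 2 * i

def orbitThreeMul (r i : ℕ) : ℕ :=
  if i = 0 then 0
  else if 3 * r ≤ i then 0
  else if i ≤ r then 3 * r + 2 - 3 * i
  else if i < 2 * r then 6 * r - 3 * i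
  else if i = 2 * r then 1
  else 9 * r + 1 - 3 * i

def orbitThreeMulAddOne (r i : ℕ) : ℕ :=
  if i = 0 then 0
  else if 3 * r + 1 ≤ i then 0
  else if i ≤ r then 3 * r + 3 - 3 * i
  else if i = r + 1 then 1
  else if i ≤ 2 * r + 1 then 6 * r + 5 - 3 * i
  else 9 * r + 4 - 3 * i

theorem orderOf_pancake_one_mul_sub_three_mul {n k : ℕ} (hk : 3 < k) (hodd : Odd k)
    (hkn : k ≤ n) : orderOf (pancake n 1 * pancake n (k - 3) * pancake n (k - 1)) = k := by
  obtain ⟨r, rfl⟩ := hodd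
  refine Perm.orderOf_eq_of_trajectory (T := orbitTwoMulAddOne r) (by omega) hkn
    (val_pancake_one_mul_sub_three_mul_apply hk hkn)
    (fun a ha => pancake_one_mul_mul_apply_of_lt (by omega) (by omega) a (by omega))
    (fun i hi => ?_) (fun i hi i' hi' h => ?_) (by simp [orbitTwoMulAddOne]) (fun i hi => ?_)
  · simp only [orbitTwoMulAddOne, mem_Iio] at hi ⊢
    split_ifs <;> omega
  · simp only [orbitTwoMulAddOne, mem_Iio] at hi hi' h
    split_ifs at h <;> omega
  · simp only [descendByTwo, orbitTwoMulAddOne, Nat.add_one_ne_zero, if_false]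
    split_ifs <;> omega

theorem orderOf_pancake_one_mul_sub_four_mul_of_mod_three_eq_zero {n k : ℕ} (hk : 4 < k)
    (h3 : k % 3 = 0) (hkn : k ≤ n) :
    orderOf (pancake n 1 * pancake n (k - 4) * pancake n (k - 1)) = k := by
  obtain ⟨r, rfl⟩ : ∃ r, k = 3 * r := ⟨k / 3, by omega⟩
  refine Perm.orderOf_eq_of_trajectory (T := orbitThreeMul r) (by omega) hkn
    (val_pancake_one_mul_sub_four_mul_apply hk hkn)
    (fun a ha => pancake_one_mul_mul_apply_of_lt (by omega) (by omega) a (by omega))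
    (fun i hi => ?_) (fun i hi i' hi' h => ?_) (by simp [orbitThreeMul]) (fun i hi => ?_)
  · simp only [orbitThreeMul, mem_Iio] at hi ⊢
    split_ifs <;> omega
  · simp only [orbitThreeMul, mem_Iio] at hi hi' h
    split_ifs at h <;> omega
  · simp only [descendByThree, orbitThreeMul, Nat.add_one_ne_zero, if_false]
    split_ifs <;> omega

theorem orderOf_pancake_one_mul_sub_four_mul_of_mod_three_eq_one {n k : ℕ} (hk : 4 < k)
    (h3 : k % 3 = 1) (hkn : k ≤ n) :
    orderOf (pancake n 1 * pancake n (k - 4) * pancake n (k - 1)) = k := by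
  obtain ⟨r, rfl⟩ : ∃ r, k = 3 * r + 1 := ⟨k / 3, by omega⟩
  refine Perm.orderOf_eq_of_trajectory (T := orbitThreeMulAddOne r) (by omega) hkn
    (val_pancake_one_mul_sub_four_mul_apply hk hkn)
    (fun a ha => pancake_one_mul_mul_apply_of_lt (by omega) (by omega) a (by omega))
    (fun i hi => ?_) (fun i hi i' hi' h => ?_) (by simp [orbitThreeMulAddOne])
    (fun i hi => ?_)
  · simp only [orbitThreeMulAddOne, mem_Iio] at hi ⊢
    split_ifs <;> omega
  · simp only [orbitThreeMulAddOne, mem_Iio] at hi hi' h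
    split_ifs at h <;> omega
  · simp only [descendByThree, orbitThreeMulAddOne, Nat.add_one_ne_zero, if_false]
    split_ifs <;> omega

/-- Let `1 < j < k ≤ n`.  If `j = k - 2` and `k` is odd, then the order of
`f_1 f_{j-1} f_{k-1}` in `S_n` is `k`; likewise if `j = k - 3` and `k` is not congruent
to `2` modulo `3`, then the order of `f_1 f_{j-1} f_{k-1}` in `S_n` is `k`. -/
theorem order_pancake_one_diff_two_three (n j k : ℕ) (hj : 1 < j) (hjk : j < k)
    (hkn : k ≤ n) :
    (j = k - 2 → Odd k →
      orderOf (pancake n 1 * pancake n (j - 1) * pancake n (k - 1)) = k) ∧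
    (j = k - 3 → k % 3 ≠ 2 →
      orderOf (pancake n 1 * pancake n (j - 1) * pancake n (k - 1)) = k) := by
  refine ⟨fun hj2 hodd => ?_, fun hj3 h3 => ?_⟩
  · rw [hj2, show k - 2 - 1 = k - 3 by omega]
    exact orderOf_pancake_one_mul_sub_three_mul (by omega) hodd hkn
  · rw [hj3, show k - 3 - 1 = k - 4 by omega]
    obtain h | h : k % 3 = 0 ∨ k % 3 = 1 := by omega
    · exact orderOf_pancake_one_mul_sub_four_mul_of_mod_three_eq_zero (by omega) h hkn
    · exact orderOf_pancake_one_mul_sub_four_mul_of_mod_three_eq_one (by omega) h hkn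
end

section
/- Let 1 < j < k ≤ n with k ≥ 5, and set d = k−j, q = ⌊k/d⌋, r = k mod d. Suppose r = 1. Then the order of f_1 f_{j−1} f_{k−1} in S_n equals: 2q+1 if d = 2; q(3q+1) if d = 4, or if d ≥ 5 and q is odd; and 2q(3q+1) if d ≥ 5 and q is even. -/
/-!
On the positions `0, …, q d` (where `k = q d + 1`, `j = (q - 1) d + 1`) the product
`f₁ f_{j-1} f_{k-1}` acts as `a ↦ a - d`, except that `a ↦ q d - a` for `a < d`, `d ↦ 1`
and `d + 1 ↦ 0`; all other positions are fixed. Following the residues mod `d`, the classes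
of `c` and `d - c` for `2 ≤ c ≤ d - 2` form a cycle of length `2q` (of length `q` when
`2c = d`), while the classes of `0`, `1`, `d - 1` merge into the single cycle
`0 → q d → ⋯ → d → 1 → q d - 1 → ⋯ → d - 1 → (q - 1) d + 1 → ⋯ → d + 1 → 0`
of length `3q + 1` (of length `2q + 1` when `d = 2`). The order is the lcm of these
lengths.
-/

namespace Equiv.Perm

variable {α : Type*} {f : Perm α} {x y : α}

theorem SameCycle.pow_apply_eq_self_iff (h : f.SameCycle x y) (N : ℕ) :
    (f ^ N) x = x ↔ (f ^ N) y = y := by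
  obtain ⟨i, rfl⟩ := h
  have hcomm : (f ^ N) ((f ^ i) x) = (f ^ i) ((f ^ N) x) := by
    simpa only [zpow_natCast] using zpow_apply_comm f N i
  rw [hcomm, (f ^ i).injective.eq_iff]

theorem dvd_orderOf_of_pow_apply_eq_self {L : ℕ} (hL : 0 < L) (hfix : (f ^ L) x = x)
    (hmove : ∀ k, 0 < k → k < L → (f ^ k) x ≠ x) : L ∣ orderOf f := by
  have hperiod : MulAction.period f x = L :=
    le_antisymm (MulAction.period_le_of_fixed hL hfix)
      (MulAction.le_period (MulAction.period_pos_of_fixed hL hfix) hmove)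
  exact hperiod ▸ MulAction.period_dvd_orderOf f x

theorem pow_apply_eq_self_of_dvd {L N : ℕ} (h : (f ^ L) x = x) (hLN : L ∣ N) :
    (f ^ N) x = x := by
  obtain ⟨t, rfl⟩ := hLN
  rw [pow_mul]
  exact pow_apply_eq_self_of_apply_eq_self h t

end Equiv.Perm

namespace Nat

theorem coprime_self_three_mul_add_one (q : ℕ) : Coprime q (3 * q + 1) := by
  rw [mul_comm, coprime_mul_left_add_right]
  exact coprime_one_right q

theorem lcm_two_mul_three_mul_add_one_of_even {q : ℕ} (hq : Even q) :
    lcm (2 * q) (3 * q + 1) = 2 * q * (3 * q + 1) := by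
  refine Coprime.lcm_eq_mul (Coprime.mul_left ?_ (coprime_self_three_mul_add_one q))
  rw [coprime_two_left]
  exact (hq.mul_left 3).add_one

theorem lcm_two_mul_three_mul_add_one_of_odd {q : ℕ} (hq : Odd q) :
    lcm (2 * q) (3 * q + 1) = q * (3 * q + 1) := by
  obtain ⟨t, rfl⟩ := hq
  apply dvd_antisymm
  · exact lcm_dvd ⟨3 * t + 2, by ring⟩ (dvd_mul_left _ _)
  · exact (coprime_self_three_mul_add_one _).mul_dvd_of_dvd_of_dvd
      ((dvd_mul_left _ 2).trans (dvd_lcm_left _ _)) (dvd_lcm_right _ _)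

end Nat

namespace Pancake

open Equiv

def prefixRev (m : ℕ) : Perm ℕ :=
  Function.Involutive.toPerm (fun a => if a ≤ m then m - a else a) fun a => by
    dsimp only
    split_ifs <;> omega

theorem prefixRev_apply (m a : ℕ) : prefixRev m a = if a ≤ m then m - a else a := rfl

theorem extendDomain_pancake {n m : ℕ} (hm : m < n) :
    (pancake n m).extendDomain Fin.equivSubtype = prefixRev m := by
  ext a
  by_cases ha : a < n
  · rw [Perm.extendDomain_apply_subtype (p := (· < n)) _ _ ha, prefixRev_apply]
    simp only [Fin.equivSubtype, pancake, hm, and_true, symm_mk, coe_fn_mk,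
      Function.Involutive.coe_toPerm]
    split_ifs <;> rfl
  · rw [Perm.extendDomain_apply_not_subtype (p := (· < n)) _ _ ha, prefixRev_apply,
      if_neg (by omega)]

theorem orderOf_pancake_mul_mul {n a b c : ℕ} (ha : a < n) (hb : b < n) (hc : c < n) :
    orderOf (pancake n a * pancake n b * pancake n c) =
      orderOf (prefixRev a * prefixRev b * prefixRev c) := by
  rw [← orderOf_injective _ (Perm.extendDomainHom_injective Fin.equivSubtype), map_mul, map_mul]
  simp only [Perm.extendDomainHom_apply, extendDomain_pancake ha, extendDomain_pancake hb,
    extendDomain_pancake hc]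

def tripleFlip (d q : ℕ) : Perm ℕ := prefixRev 1 * prefixRev ((q - 1) * d) * prefixRev (q * d)

variable {d q : ℕ}

theorem tripleFlip_apply (a : ℕ) :
    tripleFlip d q a = prefixRev 1 (prefixRev (q * d - d) (prefixRev (q * d) a)) := by
  rw [tripleFlip, Nat.sub_one_mul]
  rfl

theorem tripleFlip_apply_of_lt {a : ℕ} (ha : a < d) (ha' : a + 2 ≤ q * d) :
    tripleFlip d q a = q * d - a := by
  simp only [tripleFlip_apply, prefixRev_apply]
  split_ifs <;> omega

theorem tripleFlip_apply_self (hq : 1 ≤ q) : tripleFlip d q d = 1 := by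
  have : 1 * d ≤ q * d := Nat.mul_le_mul_right d hq
  simp only [tripleFlip_apply, prefixRev_apply]
  split_ifs <;> omega

theorem tripleFlip_apply_add_one_self (hq : 2 ≤ q) : tripleFlip d q (d + 1) = 0 := by
  have : 2 * d ≤ q * d := Nat.mul_le_mul_right d hq
  simp only [tripleFlip_apply, prefixRev_apply]
  split_ifs <;> omega

theorem tripleFlip_apply_of_le {a : ℕ} (h₁ : d + 2 ≤ a) (h₂ : a ≤ q * d) :
    tripleFlip d q a = a - d := by
  simp only [tripleFlip_apply, prefixRev_apply]
  split_ifs <;> omega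

theorem tripleFlip_apply_of_gt {a : ℕ} (hqd : 0 < q * d) (ha : q * d < a) :
    tripleFlip d q a = a := by
  simp only [tripleFlip_apply, prefixRev_apply]
  split_ifs <;> omega

theorem tripleFlip_pow_apply_add_mul {c : ℕ} (hc : 2 ≤ c) :
    ∀ {i : ℕ}, c + i * d ≤ q * d → (tripleFlip d q ^ i) (c + i * d) = c
  | 0, _ => by simp
  | i + 1, h => by
    have hstep : tripleFlip d q (c + (i + 1) * d) = c + i * d := by
      rw [tripleFlip_apply_of_le (by nlinarith) h, add_one_mul]
      omega
    rw [pow_succ, Perm.mul_apply, hstep, tripleFlip_pow_apply_add_mul hc (by nlinarith)]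

theorem tripleFlip_pow_succ_apply_of_lt {c i j : ℕ} (hc : c + 2 ≤ d) (hq : i + j + 1 = q) :
    (tripleFlip d q ^ (i + 1)) c = d - c + j * d := by
  have hqd : q * d = (d - c + j * d) + i * d + c := by
    subst hq
    rw [add_mul, add_mul, one_mul]
    omega
  rw [pow_succ, Perm.mul_apply, tripleFlip_apply_of_lt (by omega) (by omega), hqd,
    Nat.add_sub_cancel, tripleFlip_pow_apply_add_mul (by omega) (by omega)]

theorem tripleFlip_pow_apply_of_lt {c : ℕ} (hc : c + 2 ≤ d) (hq : 1 ≤ q) :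
    (tripleFlip d q ^ q) c = d - c := by
  obtain ⟨i, rfl⟩ : ∃ i, q = i + 1 := ⟨q - 1, by omega⟩
  simpa using tripleFlip_pow_succ_apply_of_lt (j := 0) hc rfl

theorem tripleFlip_pow_succ_apply_sub_one {i j : ℕ} (hd : 1 ≤ d) (hq : i + j + 2 = q) :
    (tripleFlip d q ^ (i + 1)) (d - 1) = d + 1 + j * d := by
  have hqd : q * d = (d + 1 + j * d) + i * d + (d - 1) := by
    subst hq
    rw [add_mul, add_mul, two_mul]
    omega
  rw [pow_succ, Perm.mul_apply, tripleFlip_apply_of_lt (by omega) (by omega), hqd,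
    Nat.add_sub_cancel, tripleFlip_pow_apply_add_mul (by omega) (by omega)]

theorem tripleFlip_pow_apply_sub_one (hd : 1 ≤ d) (hq : 2 ≤ q) :
    (tripleFlip d q ^ q) (d - 1) = 0 := by
  obtain ⟨i, rfl⟩ : ∃ i, q = i + 2 := ⟨q - 2, by omega⟩
  rw [pow_succ', Perm.mul_apply, tripleFlip_pow_succ_apply_sub_one (j := 0) hd rfl, zero_mul,
    add_zero, tripleFlip_apply_add_one_self hq]

theorem tripleFlip_pow_apply_zero (hd : 2 ≤ d) (hq : 1 ≤ q) : (tripleFlip d q ^ q) 0 = d :=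
  tripleFlip_pow_apply_of_lt hd hq

theorem tripleFlip_pow_succ_apply_zero (hd : 2 ≤ d) (hq : 1 ≤ q) :
    (tripleFlip d q ^ (q + 1)) 0 = 1 := by
  rw [pow_succ', Perm.mul_apply, tripleFlip_pow_apply_zero hd hq, tripleFlip_apply_self hq]

theorem tripleFlip_pow_apply_zero_self (hd : 3 ≤ d) (hq : 2 ≤ q) :
    (tripleFlip d q ^ (3 * q + 1)) 0 = 0 := by
  rw [show 3 * q + 1 = q + (q + (q + 1)) by ring, pow_add, pow_add, Perm.mul_apply,
    Perm.mul_apply, tripleFlip_pow_succ_apply_zero (by omega) (by omega),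
    tripleFlip_pow_apply_of_lt (c := 1) hd (by omega), tripleFlip_pow_apply_sub_one (by omega) hq]

theorem tripleFlip_two_pow_apply_zero_self (hq : 2 ≤ q) :
    (tripleFlip 2 q ^ (2 * q + 1)) 0 = 0 := by
  rw [show 2 * q + 1 = q + (q + 1) by ring, pow_add, Perm.mul_apply,
    tripleFlip_pow_succ_apply_zero le_rfl (by omega)]
  exact tripleFlip_pow_apply_sub_one (d := 2) (by omega) hq

theorem tripleFlip_pow_two_mul_apply {c : ℕ} (hc₂ : 2 ≤ c) (hc : c + 2 ≤ d) (hq : 1 ≤ q) :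
    (tripleFlip d q ^ (2 * q)) c = c := by
  rw [two_mul, pow_add, Perm.mul_apply, tripleFlip_pow_apply_of_lt hc hq,
    tripleFlip_pow_apply_of_lt (by omega) hq]
  omega

theorem tripleFlip_pow_apply_ne_zero_of_lt {c l : ℕ} (hc : c + 2 ≤ d) (hl : 0 < l)
    (hlq : l ≤ q) : (tripleFlip d q ^ l) c ≠ 0 := by
  obtain ⟨i, j, rfl, rfl⟩ : ∃ i j, l = i + 1 ∧ q = i + j + 1 :=
    ⟨l - 1, q - l, by omega, by omega⟩
  rw [tripleFlip_pow_succ_apply_of_lt hc rfl]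
  omega

theorem tripleFlip_pow_apply_sub_one_ne_zero {l : ℕ} (hd : 1 ≤ d) (hl : 0 < l) (hlq : l < q) :
    (tripleFlip d q ^ l) (d - 1) ≠ 0 := by
  obtain ⟨i, j, rfl, rfl⟩ : ∃ i j, l = i + 1 ∧ q = i + j + 2 :=
    ⟨l - 1, q - l - 1, by omega, by omega⟩
  rw [tripleFlip_pow_succ_apply_sub_one hd rfl]
  omega

theorem tripleFlip_pow_apply_zero_ne_of_le {k : ℕ} (hd : 2 ≤ d) (hq : 1 ≤ q) (hk : 0 < k)
    (hkq : k ≤ q + 1) : (tripleFlip d q ^ k) 0 ≠ 0 := by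
  rcases hkq.lt_or_eq with hkq | rfl
  · exact tripleFlip_pow_apply_ne_zero_of_lt hd hk (by omega)
  · rw [tripleFlip_pow_succ_apply_zero hd hq]
    exact one_ne_zero

theorem tripleFlip_pow_apply_zero_ne {k : ℕ} (hd : 3 ≤ d) (hk : 0 < k) (hkq : k < 3 * q + 1) :
    (tripleFlip d q ^ k) 0 ≠ 0 := by
  rcases le_or_gt k (q + 1) with h₁ | h₁
  · exact tripleFlip_pow_apply_zero_ne_of_le (by omega) (by omega) hk h₁
  rcases le_or_gt k (2 * q + 1) with h₂ | h₂
  · obtain ⟨l, rfl⟩ : ∃ l, k = l + (q + 1) := ⟨k - (q + 1), by omega⟩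
    rw [pow_add, Perm.mul_apply, tripleFlip_pow_succ_apply_zero (by omega) (by omega)]
    exact tripleFlip_pow_apply_ne_zero_of_lt hd (by omega) (by omega)
  · obtain ⟨l, rfl⟩ : ∃ l, k = l + (q + (q + 1)) := ⟨k - (2 * q + 1), by omega⟩
    rw [pow_add, pow_add, Perm.mul_apply, Perm.mul_apply,
      tripleFlip_pow_succ_apply_zero (by omega) (by omega),
      tripleFlip_pow_apply_of_lt hd (by omega)]
    exact tripleFlip_pow_apply_sub_one_ne_zero (by omega) (by omega) (by omega)

theorem tripleFlip_two_pow_apply_zero_ne {k : ℕ} (hk : 0 < k) (hkq : k < 2 * q + 1) :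
    (tripleFlip 2 q ^ k) 0 ≠ 0 := by
  rcases le_or_gt k (q + 1) with h₁ | h₁
  · exact tripleFlip_pow_apply_zero_ne_of_le le_rfl (by omega) hk h₁
  · obtain ⟨l, rfl⟩ : ∃ l, k = l + (q + 1) := ⟨k - (q + 1), by omega⟩
    rw [pow_add, Perm.mul_apply, tripleFlip_pow_succ_apply_zero le_rfl (by omega)]
    exact tripleFlip_pow_apply_sub_one_ne_zero (d := 2) (by omega) (by omega) (by omega)

theorem tripleFlip_pow_apply_ne_of_lt {c k : ℕ} (hc : c + 2 ≤ d) (hk : 0 < k) (hkq : k < q) :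
    (tripleFlip d q ^ k) c ≠ c := by
  obtain ⟨i, j, rfl, rfl⟩ : ∃ i j, k = i + 1 ∧ q = i + (j + 1) + 1 :=
    ⟨k - 1, q - k - 1, by omega, by omega⟩
  rw [tripleFlip_pow_succ_apply_of_lt hc rfl, add_one_mul]
  omega

theorem tripleFlip_pow_apply_two_ne (hd : 5 ≤ d) {k : ℕ} (hk : 0 < k) (hkq : k < 2 * q) :
    (tripleFlip d q ^ k) 2 ≠ 2 := by
  rcases le_or_gt k q with hk' | hk'
  · obtain ⟨i, j, rfl, rfl⟩ : ∃ i j, k = i + 1 ∧ q = i + j + 1 :=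
      ⟨k - 1, q - k, by omega, by omega⟩
    rw [tripleFlip_pow_succ_apply_of_lt (by omega) rfl]
    omega
  · obtain ⟨l, rfl⟩ : ∃ l, k = l + q := ⟨k - q, by omega⟩
    rw [pow_add, Perm.mul_apply, tripleFlip_pow_apply_of_lt (by omega) (by omega)]
    obtain ⟨i, j, rfl, hq⟩ : ∃ i j, l = i + 1 ∧ q = i + (j + 1) + 1 :=
      ⟨l - 1, q - l - 1, by omega, by omega⟩
    rw [tripleFlip_pow_succ_apply_of_lt (by omega) hq.symm, add_one_mul]
    omega

theorem tripleFlip_sameCycle_zero_or (hd : 2 ≤ d) (hq : 2 ≤ q) {a : ℕ} (ha : a ≤ q * d) :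
    (tripleFlip d q).SameCycle a 0 ∨
      ∃ c, 2 ≤ c ∧ c + 2 ≤ d ∧ (tripleFlip d q).SameCycle a c := by
  have h_d : (tripleFlip d q).SameCycle d 0 :=
    .symm ⟨q, by rw [zpow_natCast, tripleFlip_pow_apply_zero hd (by omega)]⟩
  rcases lt_or_ge a 2 with ha₂ | ha₂
  · interval_cases a
    · exact .inl .rfl
    · refine .inl (.trans ⟨-1, ?_⟩ h_d)
      rw [zpow_neg_one, Perm.inv_eq_iff_eq, tripleFlip_apply_self (by omega)]
  obtain ⟨c, m, hc₂, hcd, rfl⟩ : ∃ c m, 2 ≤ c ∧ c < d + 2 ∧ a = c + m * d := by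
    refine ⟨(a - 2) % d + 2, (a - 2) / d, by omega, ?_, ?_⟩
    · have := Nat.mod_lt (a - 2) (by omega : 0 < d)
      omega
    · have := Nat.mod_add_div' (a - 2) d
      omega
  have h_c : (tripleFlip d q).SameCycle (c + m * d) c :=
    ⟨m, by rw [zpow_natCast, tripleFlip_pow_apply_add_mul hc₂ ha]⟩
  rcases le_or_gt (c + 2) d with hc | hc
  · exact .inr ⟨c, hc₂, hc, h_c⟩
  refine .inl (h_c.trans ?_)
  obtain rfl | rfl | rfl : c = d - 1 ∨ c = d ∨ c = d + 1 := by omega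
  · exact ⟨q, by rw [zpow_natCast, tripleFlip_pow_apply_sub_one (by omega) hq]⟩
  · exact h_d
  · exact ⟨1, by rw [zpow_one, tripleFlip_apply_add_one_self hq]⟩

theorem tripleFlip_pow_eq_one (hd : 2 ≤ d) (hq : 2 ≤ q) {N : ℕ}
    (h₀ : (tripleFlip d q ^ N) 0 = 0)
    (hc : ∀ c, 2 ≤ c → c + 2 ≤ d → (tripleFlip d q ^ N) c = c) :
    tripleFlip d q ^ N = 1 := by
  ext a
  rw [Perm.one_apply]
  rcases le_or_gt a (q * d) with ha | ha
  · rcases tripleFlip_sameCycle_zero_or hd hq ha with h | ⟨c, hc₂, hcd, h⟩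
    · exact (h.pow_apply_eq_self_iff N).2 h₀
    · exact (h.pow_apply_eq_self_iff N).2 (hc c hc₂ hcd)
  · exact Perm.pow_apply_eq_self_of_apply_eq_self (tripleFlip_apply_of_gt (by positivity) ha) N

theorem orderOf_tripleFlip_two (hq : 2 ≤ q) : orderOf (tripleFlip 2 q) = 2 * q + 1 :=
  Nat.dvd_antisymm
    (orderOf_dvd_of_pow_eq_one <| tripleFlip_pow_eq_one le_rfl hq
      (tripleFlip_two_pow_apply_zero_self hq) fun _ _ _ => by omega)
    (Perm.dvd_orderOf_of_pow_apply_eq_self (by omega) (tripleFlip_two_pow_apply_zero_self hq)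
      fun _ => tripleFlip_two_pow_apply_zero_ne)

theorem orderOf_tripleFlip_four (hq : 2 ≤ q) : orderOf (tripleFlip 4 q) = q * (3 * q + 1) := by
  have h₀ := tripleFlip_pow_apply_zero_self (d := 4) (by norm_num) hq
  have h₂ := tripleFlip_pow_apply_of_lt (d := 4) (c := 2) le_rfl (by omega : 1 ≤ q)
  apply Nat.dvd_antisymm
  · refine orderOf_dvd_of_pow_eq_one (tripleFlip_pow_eq_one (by norm_num) hq
      (Perm.pow_apply_eq_self_of_dvd h₀ (dvd_mul_left _ _)) fun c hc₂ hc => ?_)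
    obtain rfl : c = 2 := by omega
    exact Perm.pow_apply_eq_self_of_dvd h₂ (dvd_mul_right _ _)
  · refine (Nat.coprime_self_three_mul_add_one q).mul_dvd_of_dvd_of_dvd ?_ ?_
    · exact Perm.dvd_orderOf_of_pow_apply_eq_self (by omega) h₂
        fun _ hk hkq => tripleFlip_pow_apply_ne_of_lt le_rfl hk hkq
    · exact Perm.dvd_orderOf_of_pow_apply_eq_self (by omega) h₀
        fun _ hk hkq => tripleFlip_pow_apply_zero_ne (by norm_num) hk hkq

theorem orderOf_tripleFlip_of_five_le (hd : 5 ≤ d) (hq : 2 ≤ q) :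
    orderOf (tripleFlip d q) = Nat.lcm (2 * q) (3 * q + 1) := by
  have h₀ := tripleFlip_pow_apply_zero_self (d := d) (by omega) hq
  apply Nat.dvd_antisymm
  · exact orderOf_dvd_of_pow_eq_one (tripleFlip_pow_eq_one (by omega) hq
      (Perm.pow_apply_eq_self_of_dvd h₀ (Nat.dvd_lcm_right _ _)) fun c hc₂ hc =>
        Perm.pow_apply_eq_self_of_dvd (tripleFlip_pow_two_mul_apply hc₂ hc (by omega))
          (Nat.dvd_lcm_left _ _))
  · exact Nat.lcm_dvd
      (Perm.dvd_orderOf_of_pow_apply_eq_self (by omega)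
        (tripleFlip_pow_two_mul_apply (c := 2) le_rfl (by omega) (by omega))
        fun _ hk hkq => tripleFlip_pow_apply_two_ne hd hk hkq)
      (Perm.dvd_orderOf_of_pow_apply_eq_self (by omega) h₀
        fun _ hk hkq => tripleFlip_pow_apply_zero_ne (by omega) hk hkq)

theorem pancake_indices_of_mod_eq_one {j k d q : ℕ} (hj : 1 < j) (hd₂ : 2 ≤ d)
    (hd : d = k - j) (hq : q = k / d) (hk : k % d = 1) :
    2 ≤ q ∧ j - 1 = (q - 1) * d ∧ k - 1 = q * d := by
  have hkq : k = q * d + 1 := by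
    have := Nat.div_add_mod' k d
    rw [← hq, hk] at this
    omega
  have hq₂ : 2 ≤ q := by
    by_contra! h
    interval_cases q <;> omega
  refine ⟨hq₂, ?_, by omega⟩
  rw [Nat.sub_one_mul]
  omega

end Pancake

theorem order_pancake_one_triple_r_one_general (n j k d q r : ℕ) (hj : 1 < j)
    (hkn : k ≤ n) (hd : d = k - j) (hq : q = k / d) (hr : r = k % d)
    (hr1 : r = 1) :
    (d = 2 → orderOf (pancake n 1 * pancake n (j - 1) * pancake n (k - 1)) = 2 * q + 1) ∧
    (d = 4 ∨ (5 ≤ d ∧ Odd q) →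
      orderOf (pancake n 1 * pancake n (j - 1) * pancake n (k - 1)) = q * (3 * q + 1)) ∧
    (5 ≤ d ∧ Even q →
      orderOf (pancake n 1 * pancake n (j - 1) * pancake n (k - 1)) =
        2 * q * (3 * q + 1)) := by
  have reduce (hd₂ : 2 ≤ d) : 2 ≤ q ∧
      orderOf (pancake n 1 * pancake n (j - 1) * pancake n (k - 1)) =
        orderOf (Pancake.tripleFlip d q) := by
    obtain ⟨hq₂, hj₁, hk₁⟩ :=
      Pancake.pancake_indices_of_mod_eq_one hj hd₂ hd hq (hr ▸ hr1)
    refine ⟨hq₂, ?_⟩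
    rw [Pancake.orderOf_pancake_mul_mul (by omega) (by omega) (by omega), hj₁, hk₁]
    rfl
  refine ⟨fun h => ?_, fun h => ?_, fun ⟨h₅, h_even⟩ => ?_⟩
  · obtain ⟨hq₂, h_ord⟩ := reduce h.ge
    rw [h_ord, h, Pancake.orderOf_tripleFlip_two hq₂]
  · rcases h with h | ⟨h₅, h_odd⟩
    · obtain ⟨hq₂, h_ord⟩ := reduce (by omega)
      rw [h_ord, h, Pancake.orderOf_tripleFlip_four hq₂]
    · obtain ⟨hq₂, h_ord⟩ := reduce (by omega)
      rw [h_ord, Pancake.orderOf_tripleFlip_of_five_le h₅ hq₂,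
        Nat.lcm_two_mul_three_mul_add_one_of_odd h_odd]
  · obtain ⟨hq₂, h_ord⟩ := reduce (by omega)
    rw [h_ord, Pancake.orderOf_tripleFlip_of_five_le h₅ hq₂,
      Nat.lcm_two_mul_three_mul_add_one_of_even h_even]

/-- Let `1 < j < k ≤ n` with `k ≥ 5`, and set `d = k - j`, `q = ⌊k/d⌋`, `r = k mod d`.
Suppose `r = 1`.  Then the order of `f_1 f_{j-1} f_{k-1}` in `S_n` is: `2q + 1` if
`d = 2`; `q(3q+1)` if `d = 4`, or if `d ≥ 5` and `q` is odd; and `2q(3q+1)` if `d ≥ 5`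
and `q` is even. -/
theorem order_pancake_one_triple_r_one (n j k d q r : ℕ) (hj : 1 < j) (hjk : j < k)
    (hkn : k ≤ n) (hk5 : 5 ≤ k) (hd : d = k - j) (hq : q = k / d) (hr : r = k % d)
    (hr1 : r = 1) :
    (d = 2 → orderOf (pancake n 1 * pancake n (j - 1) * pancake n (k - 1)) = 2 * q + 1) ∧
    (d = 4 ∨ (5 ≤ d ∧ Odd q) →
      orderOf (pancake n 1 * pancake n (j - 1) * pancake n (k - 1)) = q * (3 * q + 1)) ∧
    (5 ≤ d ∧ Even q →
      orderOf (pancake n 1 * pancake n (j - 1) * pancake n (k - 1)) =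
        2 * q * (3 * q + 1)) :=
  order_pancake_one_triple_r_one_general n j k d q r hj hkn hd hq hr hr1
end

section
/- Let 1 ≤ i < j ≤ n with j ≥ 4. If 1 < i ≤ ⌊j/2⌋, then the order of the product f^B_{i−1} f^B_{j−1} of burnt pancake generators in the hyperoctahedral group B_n is 4. -/
/-- The burnt pancake generator `f^B_m` of the hyperoctahedral group `B_n` of signed
permutations, modeled as a permutation of `Fin n × Bool` (a `0`-indexed position together
with a sign, `false` meaning positive): it reverses and negates the first `m+1` entries,
sending `(a, s)` to `(m - a, !s)` whenever `a ≤ m` (and `m < n`), and fixing all other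
points.  (In `1`-indexed terms, `f^B_m a = -(m + 2 - a)` for `1 ≤ a ≤ m + 1` and
`f^B_m a = a` for `m + 1 < a ≤ n`; for `m = 0` it is the sign change of the first entry.) -/
def bpancake (n m : ℕ) : Equiv.Perm (Fin n × Bool) :=
  Function.Involutive.toPerm
    (fun x => if h : (x.1 : ℕ) ≤ m ∧ m < n then
        (⟨m - (x.1 : ℕ), Nat.lt_of_le_of_lt (Nat.sub_le m x.1) h.2⟩, !x.2) else x)
    (by
      intro x
      dsimp only
      by_cases h : (x.1 : ℕ) ≤ m ∧ m < n
      · rw [dif_pos h, dif_pos ⟨Nat.sub_le m (x.1 : ℕ), h.2⟩]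
        exact Prod.ext (Fin.ext (Nat.sub_sub_self h.1)) (Bool.not_not x.2)
      · rw [dif_neg h, dif_neg h])

/-!
Write `f_m` for `bpancake n m` and `g = f_p f_q` with `p = i - 1`, `q = j - 1`. Since the `f_m` are involutions,
`g² = f_p · (f_q f_p f_q)`, and the second factor is the burnt flip of the block of positions
`[q - p, q]`. When `2p < q` this block is disjoint from the block `[0, p]` flipped by `f_p`, so
`g²` is a product of two commuting involutions, hence `g⁴ = 1`; and `g² ≠ 1` because it agrees
with `f_p` on the first entry, whose sign `f_p` changes.
-/

section BurntPancake

variable {n m : ℕ}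

theorem bpancake_apply_of_le {x : Fin n × Bool} (hx : (x.1 : ℕ) ≤ m) (hm : m < n) :
    bpancake n m x = (⟨m - x.1, by omega⟩, !x.2) :=
  dif_pos ⟨hx, hm⟩

theorem bpancake_apply_of_lt {x : Fin n × Bool} (hx : m < x.1) : bpancake n m x = x :=
  dif_neg fun h => absurd h.1 (by omega)

theorem bpancake_apply_ne {x : Fin n × Bool} (hx : (x.1 : ℕ) ≤ m) (hm : m < n) :
    bpancake n m x ≠ x := by
  rw [bpancake_apply_of_le hx hm]
  exact fun h => Bool.not_ne_self x.2 (congrArg Prod.snd h)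

variable (n m) in
theorem bpancake_inv : (bpancake n m)⁻¹ = bpancake n m := rfl

theorem disjoint_bpancake_conj {p q : ℕ} (hpq : 2 * p < q) (hq : q < n) :
    (bpancake n p).Disjoint (bpancake n q * bpancake n p * (bpancake n q)⁻¹) := by
  intro x
  rcases Nat.lt_or_ge p x.1 with hx | hx
  · exact Or.inl (bpancake_apply_of_lt hx)
  · refine Or.inr ?_
    have hflip : p < ((bpancake n q)⁻¹ x).1 := by
      rw [bpancake_inv, bpancake_apply_of_le (by omega) hq]
      dsimp only
      omega
    rw [Equiv.Perm.mul_apply, Equiv.Perm.mul_apply, bpancake_apply_of_lt hflip]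
    exact (bpancake n q).apply_symm_apply x

theorem orderOf_bpancake_mul_bpancake {p q : ℕ} (hpq : 2 * p < q) (hq : q < n) :
    orderOf (bpancake n p * bpancake n q) = 4 := by
  set c := bpancake n q * bpancake n p * (bpancake n q)⁻¹
  have hdisj := disjoint_bpancake_conj hpq hq
  have hsq : (bpancake n p * bpancake n q) ^ 2 = bpancake n p * c := by
    simp only [c, bpancake_inv, pow_two, mul_assoc]
  have hinv : bpancake n p ^ 2 = 1 := by
    rw [pow_two, ← inv_eq_iff_mul_eq_one, bpancake_inv]
  have hp : p < n := by omega
  set x₀ : Fin n × Bool := (⟨0, by omega⟩, false)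
  have hx₀ : (x₀.1 : ℕ) ≤ p := Nat.zero_le p
  have hc : c x₀ = x₀ := (hdisj x₀).resolve_left (bpancake_apply_ne hx₀ hp)
  refine orderOf_eq_prime_pow (p := 2) (n := 1) ?_ ?_
  · rw [pow_one, hsq]
    intro h
    refine bpancake_apply_ne hx₀ hp ?_
    simpa only [Equiv.Perm.mul_apply, hc, Equiv.Perm.one_apply] using DFunLike.congr_fun h x₀
  · rw [pow_succ, pow_one, pow_mul, hsq, hdisj.commute.mul_pow, hinv, conj_pow, hinv]
    group

end BurntPancake

theorem order_bpancake_mul_of_le_half_general (n i j : ℕ) (hi1 : 1 ≤ i)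
    (hjn : j ≤ n) (hhalf : i ≤ j / 2) :
    orderOf (bpancake n (i - 1) * bpancake n (j - 1)) = 4 :=
  orderOf_bpancake_mul_bpancake (by omega) (by omega)

/-- If `1 ≤ i < j ≤ n`, `j ≥ 4` and `1 < i ≤ ⌊j/2⌋`, then the order of
`f^B_{i-1} f^B_{j-1}` in the hyperoctahedral group `B_n` is `4`. -/
theorem order_bpancake_mul_of_le_half (n i j : ℕ) (hi1 : 1 ≤ i) (hij : i < j)
    (hjn : j ≤ n) (hj4 : 4 ≤ j) (hi : 1 < i) (hhalf : i ≤ j / 2) :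
    orderOf (bpancake n (i - 1) * bpancake n (j - 1)) = 4 :=
  order_bpancake_mul_of_le_half_general n i j hi1 hjn hhalf
end
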